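/- Let p ≥ 1. There exists a constant C > 0, depending only on p, such that for all continuous X, Y : [0,1]² → ℝ with finite controlled p-variation norm, the pointwise product Z(s,t) := X(s,t)·Y(s,t) has finite p-variation norm and ‖Z‖_{p-var} ≤ C·‖X‖_{p-cvar}·‖Y‖_{p-cvar}. -/

import Mathlib

open scoped ENNReal

/-- The `p`-th power of the 1D `p`-variation of `x : ℝ → E` over `[s,s']`:
the supremum, over all finite monotone partitions `s = r₀ ≤ r₁ ≤ ... ≤ r_k = s'`, of
`∑ᵢ ‖x(rᵢ₊₁) − x(rᵢ)‖^p`, valued in `ℝ≥0∞`. -/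
noncomputable def oneVarPow {E : Type*} [NormedAddCommGroup E]
    (p : ℝ) (x : ℝ → E) (s s' : ℝ) : ℝ≥0∞ :=
  ⨆ (k : ℕ) (r : Fin (k + 1) → ℝ) (_ : Monotone r) (_ : r 0 = s) (_ : r (Fin.last k) = s'),
    ∑ i : Fin k, (‖x (r i.succ) - x (r i.castSucc)‖₊ : ℝ≥0∞) ^ p

/-- The 1D `p`-variation `|x|_{p;[s,s']}`, i.e. the `1/p`-th power of `oneVarPow`. -/
noncomputable def oneVar {E : Type*} [NormedAddCommGroup E]
    (p : ℝ) (x : ℝ → E) (s s' : ℝ) : ℝ≥0∞ :=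
  oneVarPow p x s s' ^ (1 / p)

/-- A closed axis-parallel rectangle `[s,s']×[t,t']` in the plane. -/
structure Rect where
  s : ℝ
  s' : ℝ
  t : ℝ
  t' : ℝ

/-- The subset of the plane determined by a rectangle. -/
def Rect.toSet (r : Rect) : Set (ℝ × ℝ) := Set.Icc r.s r.s' ×ˢ Set.Icc r.t r.t'

/-- The unit square `[0,1]²`. -/
def unitRect : Rect := ⟨0, 1, 0, 1⟩

/-- The 2D increment `□_R[X] := X(s,t) − X(s',t) − X(s,t') + X(s',t')` of `X` over the
rectangle `R = [s,s']×[t,t']`. -/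
def boxInc {E : Type*} [NormedAddCommGroup E] (X : ℝ → ℝ → E) (r : Rect) : E :=
  X r.s r.t - X r.s' r.t - X r.s r.t' + X r.s' r.t'

/-- `π : Fin K → Rect` is a rectangle partition of `R`: a finite collection of closed
subrectangles with pairwise disjoint interiors whose union is `R`. -/
def IsRectPartition (R : Rect) {K : ℕ} (π : Fin K → Rect) : Prop :=
  (∀ i, (π i).s ≤ (π i).s' ∧ (π i).t ≤ (π i).t') ∧
  (∀ i j, i ≠ j → interior (π i).toSet ∩ interior (π j).toSet = ∅) ∧
  (⋃ i, (π i).toSet) = R.toSet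

/-- The `p`-th power of the controlled 2D `p`-variation of `X` over the rectangle `R`:
the supremum over all rectangle partitions `π` of `R` of `∑_{r ∈ π} ‖□_r[X]‖^p`. -/
noncomputable def cVarPow {E : Type*} [NormedAddCommGroup E]
    (p : ℝ) (X : ℝ → ℝ → E) (R : Rect) : ℝ≥0∞ :=
  ⨆ (K : ℕ) (π : Fin K → Rect) (_ : IsRectPartition R π),
    ∑ i, (‖boxInc X (π i)‖₊ : ℝ≥0∞) ^ p

/-- The controlled 2D `p`-variation `|X|_{p;R}`, i.e. the `1/p`-th power of `cVarPow`. -/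
noncomputable def cVar {E : Type*} [NormedAddCommGroup E]
    (p : ℝ) (X : ℝ → ℝ → E) (R : Rect) : ℝ≥0∞ :=
  cVarPow p X R ^ (1 / p)

/-- The `p`-th power of the grid 2D `p`-variation of `X` over the rectangle `R`:
the supremum over all grid-like partitions of `∑_{i,j} ‖□_{[σᵢ,σᵢ₊₁]×[τⱼ,τⱼ₊₁]}[X]‖^p`. -/
noncomputable def gridVarPow {E : Type*} [NormedAddCommGroup E]
    (p : ℝ) (X : ℝ → ℝ → E) (R : Rect) : ℝ≥0∞ :=
  ⨆ (n : ℕ) (m : ℕ) (σ : Fin (n + 1) → ℝ) (τ : Fin (m + 1) → ℝ)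
    (_ : Monotone σ) (_ : Monotone τ)
    (_ : σ 0 = R.s) (_ : σ (Fin.last n) = R.s')
    (_ : τ 0 = R.t) (_ : τ (Fin.last m) = R.t'),
    ∑ i : Fin n, ∑ j : Fin m,
      (‖boxInc X ⟨σ i.castSucc, σ i.succ, τ j.castSucc, τ j.succ⟩‖₊ : ℝ≥0∞) ^ p

/-- The grid 2D `p`-variation `V_p(X;R)`, i.e. the `1/p`-th power of `gridVarPow`. -/
noncomputable def gridVar {E : Type*} [NormedAddCommGroup E]
    (p : ℝ) (X : ℝ → ℝ → E) (R : Rect) : ℝ≥0∞ :=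
  gridVarPow p X R ^ (1 / p)

/-- The supremum norm `sup_{[0,1]²} ‖X‖`, valued in `ℝ≥0∞`. -/
noncomputable def supNormSq {E : Type*} [NormedAddCommGroup E] (X : ℝ → ℝ → E) : ℝ≥0∞ :=
  ⨆ (s ∈ Set.Icc (0:ℝ) 1) (t ∈ Set.Icc (0:ℝ) 1), (‖X s t‖₊ : ℝ≥0∞)

/-- The controlled `p`-variation norm
`‖X‖_{p-cvar} := sup ‖X‖ + |X(·,0)|_p + |X(0,·)|_p + |X|_{p;[0,1]²}`. -/
noncomputable def cvarNorm {E : Type*} [NormedAddCommGroup E]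
    (p : ℝ) (X : ℝ → ℝ → E) : ℝ≥0∞ :=
  supNormSq X + oneVar p (fun s => X s 0) 0 1 + oneVar p (fun t => X 0 t) 0 1 +
    cVar p X unitRect

/-- The `p`-variation norm
`‖X‖_{p-var} := sup ‖X‖ + |X(·,0)|_p + |X(0,·)|_p + V_p(X;[0,1]²)`. -/
noncomputable def varNorm {E : Type*} [NormedAddCommGroup E]
    (p : ℝ) (X : ℝ → ℝ → E) : ℝ≥0∞ :=
  supNormSq X + oneVar p (fun s => X s 0) 0 1 + oneVar p (fun t => X 0 t) 0 1 +
    gridVar p X unitRect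

/-!
The box increment of a product obeys the discrete Leibniz rule
`□(XY) = □X · Y(s',t') + Δ₁X · Δ₂Y + Δ₂X · Δ₁Y + X(s,t) · □Y`.
Summed over a grid, the two outer terms are at most the sup norm of one factor times the
controlled variation of the other. The mixed terms reduce to sums of one-dimensional increments
taken along staircases rather than along a fixed line; these are controlled by the controlled
variation, because the strips below a staircase are part of a rectangle partition (though not of
a grid partition) of the square. Minkowski's inequality assembles the pieces, with constant 15.
-/

open Set

lemma ENNReal.rpow_one_div_le_iff {x y : ℝ≥0∞} {p : ℝ} (hp : 0 < p) :
    x ^ (1 / p) ≤ y ↔ x ≤ y ^ p := by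
  rw [one_div, ENNReal.rpow_inv_le_iff hp]

lemma ENNReal.sum_rpow_le_add_rpow {ι : Type*} {s : Finset ι} {F f g : ι → ℝ≥0∞}
    {a b : ℝ≥0∞} {p : ℝ} (hp : 1 ≤ p) (hF : ∀ i ∈ s, F i ≤ f i + g i)
    (hf : ∑ i ∈ s, f i ^ p ≤ a ^ p) (hg : ∑ i ∈ s, g i ^ p ≤ b ^ p) :
    ∑ i ∈ s, F i ^ p ≤ (a + b) ^ p := by
  have hp0 : 0 < p := zero_lt_one.trans_le hp
  calc ∑ i ∈ s, F i ^ p ≤ ∑ i ∈ s, (f i + g i) ^ p :=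
        Finset.sum_le_sum fun i hi => ENNReal.rpow_le_rpow (hF i hi) hp0.le
    _ ≤ (a + b) ^ p := by
        rw [← ENNReal.rpow_one_div_le_iff hp0]
        refine (ENNReal.Lp_add_le s f g hp).trans (add_le_add ?_ ?_)
        · exact (ENNReal.rpow_one_div_le_iff hp0).2 hf
        · exact (ENNReal.rpow_one_div_le_iff hp0).2 hg

lemma ENNReal.sum_sum_mul_le {ι κ : Type*} [Fintype ι] [Fintype κ] (a b : ι → κ → ℝ≥0∞)
    {α β : ℝ≥0∞} (ha : ∀ f : ι → κ, ∑ i, a i (f i) ≤ α) (hb : ∀ i, ∑ j, b i j ≤ β) :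
    ∑ i, ∑ j, a i j * b i j ≤ α * β := by
  cases isEmpty_or_nonempty κ
  · simp
  choose f hf using fun i => Finite.exists_max (a i)
  calc ∑ i, ∑ j, a i j * b i j ≤ ∑ i, a i (f i) * ∑ j, b i j := by
        simp only [Finset.mul_sum]
        gcongr with i _ j
        exact hf i j
    _ ≤ ∑ i, a i (f i) * β := by gcongr with i; exact hb i
    _ = (∑ i, a i (f i)) * β := Finset.sum_mul .. |>.symm
    _ ≤ α * β := by gcongr; exact ha f

structure IsIccPartition {n : ℕ} (σ : Fin (n + 1) → ℝ) (a b : ℝ) : Prop where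
  mono : Monotone σ
  zero : σ 0 = a
  last : σ (Fin.last n) = b

namespace IsIccPartition

variable {n : ℕ} {σ : Fin (n + 1) → ℝ} {a b : ℝ}

lemma mem_Icc (hσ : IsIccPartition σ a b) (i : Fin (n + 1)) : σ i ∈ Icc a b :=
  ⟨hσ.zero ▸ hσ.mono (Fin.zero_le i), hσ.last ▸ hσ.mono (Fin.le_last i)⟩

lemma exists_mem_Icc (hσ : IsIccPartition σ a b) (hn : 0 < n) {x : ℝ} (hx : x ∈ Icc a b) :
    ∃ i : Fin n, x ∈ Icc (σ i.castSucc) (σ i.succ) := by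
  obtain ⟨k, rfl⟩ : ∃ k, n = k + 1 := Nat.exists_eq_succ_of_ne_zero hn.ne'
  by_contra! h
  replace h : ∀ i : Fin (k + 1), σ i.castSucc ≤ x → σ i.succ < x := fun i hi =>
    lt_of_not_ge fun hi' => h i ⟨hi, hi'⟩
  have hle : ∀ i, σ i ≤ x := Fin.induction (hσ.zero ▸ hx.1) fun i hi => (h i hi).le
  have := h (Fin.last k) (hle _)
  rw [Fin.succ_last, hσ.last] at this
  exact this.not_ge hx.2

lemma Ioo_inter_Ioo_eq_empty (hσ : IsIccPartition σ a b) {i i' : Fin n} (h : i ≠ i') :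
    Ioo (σ i.castSucc) (σ i.succ) ∩ Ioo (σ i'.castSucc) (σ i'.succ) = ∅ := by
  wlog hlt : i < i' generalizing i i'
  · rw [inter_comm]; exact this h.symm (h.lt_or_gt.resolve_left hlt)
  have := hσ.mono (Fin.succ_le_castSucc_iff.2 hlt)
  exact eq_empty_of_forall_notMem fun x ⟨⟨_, h₁⟩, h₂, _⟩ => by linarith

lemma three {c : ℝ} (hab : a ≤ b) (hbc : b ≤ c) : IsIccPartition ![a, b, c] a c := by
  refine ⟨Fin.monotone_iff_le_succ.2 fun i => ?_, rfl, rfl⟩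
  fin_cases i <;> simpa

end IsIccPartition

def Rect.swap (r : Rect) : Rect := ⟨r.t, r.t', r.s, r.s'⟩

lemma Rect.interior_toSet (r : Rect) : interior r.toSet = Ioo r.s r.s' ×ˢ Ioo r.t r.t' := by
  rw [Rect.toSet, interior_prod_eq, interior_Icc, interior_Icc]

lemma Rect.toSet_swap (r : Rect) : r.swap.toSet = Prod.swap ⁻¹' r.toSet :=
  (preimage_swap_prod _ _).symm

lemma IsRectPartition.swap {R : Rect} {K : ℕ} {π : Fin K → Rect} (h : IsRectPartition R π) :
    IsRectPartition R.swap fun i => (π i).swap := by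
  obtain ⟨hle, hdisj, hunion⟩ := h
  refine ⟨fun i => (hle i).symm, fun i j hij => ?_, ?_⟩
  · have := hdisj i j hij
    simp only [Rect.interior_toSet, prod_inter_prod, prod_eq_empty_iff] at this ⊢
    exact this.symm
  · simp only [Rect.toSet_swap, ← preimage_iUnion, hunion]

lemma isRectPartition_columns {R : Rect} {n m : ℕ} (hn : 0 < n) (hm : 0 < m)
    {σ : Fin (n + 1) → ℝ} {τ : Fin n → Fin (m + 1) → ℝ} (hσ : IsIccPartition σ R.s R.s')
    (hτ : ∀ i, IsIccPartition (τ i) R.t R.t') :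
    IsRectPartition R fun k =>
      let q := finProdFinEquiv.symm k
      ⟨σ q.1.castSucc, σ q.1.succ, τ q.1 q.2.castSucc, τ q.1 q.2.succ⟩ := by
  refine ⟨fun k => ⟨hσ.mono (Fin.castSucc_le_succ _), (hτ _).mono (Fin.castSucc_le_succ _)⟩,
    fun k k' hkk' => ?_, ?_⟩
  · obtain ⟨⟨i, j⟩, rfl⟩ := finProdFinEquiv.surjective k
    obtain ⟨⟨i', j'⟩, rfl⟩ := finProdFinEquiv.surjective k'
    simp only [Equiv.symm_apply_apply, Rect.interior_toSet, prod_inter_prod, prod_eq_empty_iff]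
    by_cases hi : i = i'
    · subst hi
      exact Or.inr <| (hτ i).Ioo_inter_Ioo_eq_empty fun hj => hkk' (by rw [hj])
    · exact Or.inl <| hσ.Ioo_inter_Ioo_eq_empty hi
  · ext ⟨x, y⟩
    simp only [mem_iUnion, Rect.toSet, mem_prod]
    constructor
    · rintro ⟨k, hx, hy⟩
      exact ⟨Icc_subset_Icc (hσ.mem_Icc _).1 (hσ.mem_Icc _).2 hx,
        Icc_subset_Icc ((hτ _).mem_Icc _).1 ((hτ _).mem_Icc _).2 hy⟩
    · rintro ⟨hx, hy⟩
      obtain ⟨i, hi⟩ := hσ.exists_mem_Icc hn hx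
      obtain ⟨j, hj⟩ := (hτ i).exists_mem_Icc hm hy
      exact ⟨finProdFinEquiv (i, j), by simpa using hi, by simpa using hj⟩

section Variation

variable {E : Type*} [NormedAddCommGroup E] {p : ℝ}

lemma boxInc_swap (X : ℝ → ℝ → E) (r : Rect) : boxInc (Function.swap X) r.swap = boxInc X r := by
  simp only [boxInc, Rect.swap, Function.swap]
  abel

lemma sum_le_oneVarPow (x : ℝ → E) {s s' : ℝ} {k : ℕ} {r : Fin (k + 1) → ℝ}
    (hr : IsIccPartition r s s') :
    ∑ i : Fin k, (‖x (r i.succ) - x (r i.castSucc)‖₊ : ℝ≥0∞) ^ p ≤ oneVarPow p x s s' :=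
  le_iSup_of_le k <| le_iSup_of_le r <| le_iSup_of_le hr.mono <| le_iSup_of_le hr.zero <|
    le_iSup_of_le hr.last le_rfl

lemma oneVarPow_le {x : ℝ → E} {s s' : ℝ} {c : ℝ≥0∞}
    (h : ∀ k (r : Fin (k + 1) → ℝ), IsIccPartition r s s' →
      ∑ i : Fin k, (‖x (r i.succ) - x (r i.castSucc)‖₊ : ℝ≥0∞) ^ p ≤ c) :
    oneVarPow p x s s' ≤ c :=
  iSup_le fun k => iSup_le fun r => iSup_le fun hm => iSup_le fun h0 => iSup_le fun h1 =>
    h k r ⟨hm, h0, h1⟩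

lemma gridVarPow_le {X : ℝ → ℝ → E} {R : Rect} {c : ℝ≥0∞}
    (h : ∀ n m (σ : Fin (n + 1) → ℝ) (τ : Fin (m + 1) → ℝ),
      IsIccPartition σ R.s R.s' → IsIccPartition τ R.t R.t' →
      ∑ i : Fin n, ∑ j : Fin m,
        (‖boxInc X ⟨σ i.castSucc, σ i.succ, τ j.castSucc, τ j.succ⟩‖₊ : ℝ≥0∞) ^ p ≤ c) :
    gridVarPow p X R ≤ c :=
  iSup_le fun n => iSup_le fun m => iSup_le fun σ => iSup_le fun τ => iSup_le fun hσ =>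
    iSup_le fun hτ => iSup_le fun hσ0 => iSup_le fun hσ1 => iSup_le fun hτ0 =>
    iSup_le fun hτ1 => h n m σ τ ⟨hσ, hσ0, hσ1⟩ ⟨hτ, hτ0, hτ1⟩

lemma sum_le_cVarPow (X : ℝ → ℝ → E) {R : Rect} {K : ℕ} {π : Fin K → Rect}
    (h : IsRectPartition R π) :
    ∑ i, (‖boxInc X (π i)‖₊ : ℝ≥0∞) ^ p ≤ cVarPow p X R :=
  le_iSup_of_le K <| le_iSup_of_le π <| le_iSup_of_le h le_rfl

lemma cVarPow_le_swap (X : ℝ → ℝ → E) (R : Rect) :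
    cVarPow p X R ≤ cVarPow p (Function.swap X) R.swap :=
  iSup_le fun _ => iSup_le fun _ => iSup_le fun h => by
    simpa only [boxInc_swap] using sum_le_cVarPow (Function.swap X) h.swap

lemma cVarPow_swap (X : ℝ → ℝ → E) (R : Rect) :
    cVarPow p (Function.swap X) R.swap = cVarPow p X R :=
  le_antisymm (cVarPow_le_swap (Function.swap X) R.swap) (cVarPow_le_swap X R)

lemma sum_columns_le_cVarPow (X : ℝ → ℝ → E) {R : Rect} {n m : ℕ} {σ : Fin (n + 1) → ℝ}
    {τ : Fin n → Fin (m + 1) → ℝ} (hσ : IsIccPartition σ R.s R.s')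
    (hτ : ∀ i, IsIccPartition (τ i) R.t R.t') :
    ∑ i : Fin n, ∑ j : Fin m,
      (‖boxInc X ⟨σ i.castSucc, σ i.succ, τ i j.castSucc, τ i j.succ⟩‖₊ : ℝ≥0∞) ^ p ≤
      cVarPow p X R := by
  rcases Nat.eq_zero_or_pos n with rfl | hn
  · simp
  rcases Nat.eq_zero_or_pos m with rfl | hm
  · simp
  rw [← Fintype.sum_prod_type', ← finProdFinEquiv.symm.sum_comp]
  exact sum_le_cVarPow X (isRectPartition_columns hn hm hσ hτ)

lemma sum_grid_le_cVarPow (X : ℝ → ℝ → E) {R : Rect} {n m : ℕ} {σ : Fin (n + 1) → ℝ}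
    {τ : Fin (m + 1) → ℝ} (hσ : IsIccPartition σ R.s R.s') (hτ : IsIccPartition τ R.t R.t') :
    ∑ i : Fin n, ∑ j : Fin m,
      (‖boxInc X ⟨σ i.castSucc, σ i.succ, τ j.castSucc, τ j.succ⟩‖₊ : ℝ≥0∞) ^ p ≤ cVarPow p X R :=
  sum_columns_le_cVarPow X (τ := fun _ => τ) hσ fun _ => hτ

lemma sum_lower_strips_le_cVarPow (X : ℝ → ℝ → E) {R : Rect} {n : ℕ} {σ : Fin (n + 1) → ℝ}
    (hσ : IsIccPartition σ R.s R.s') (t : Fin n → ℝ) (ht : ∀ i, t i ∈ Icc R.t R.t') :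
    ∑ i : Fin n, (‖boxInc X ⟨σ i.castSucc, σ i.succ, R.t, t i⟩‖₊ : ℝ≥0∞) ^ p ≤ cVarPow p X R := by
  refine le_trans ?_ <| sum_columns_le_cVarPow X hσ fun i => IsIccPartition.three (ht i).1 (ht i).2
  gcongr with i
  rw [Fin.sum_univ_two]
  exact le_self_add

lemma supNormSq_swap (X : ℝ → ℝ → E) : supNormSq (Function.swap X) = supNormSq X :=
  iSup₂_comm _

lemma cvarNorm_swap (X : ℝ → ℝ → E) : cvarNorm p (Function.swap X) = cvarNorm p X := by
  have hcVar : cVar p (Function.swap X) unitRect = cVar p X unitRect :=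
    congrArg (· ^ (1 / p)) (cVarPow_swap X unitRect)
  show supNormSq (Function.swap X) + oneVar p (fun t => X 0 t) 0 1 +
    oneVar p (fun s => X s 0) 0 1 + cVar p (Function.swap X) unitRect = cvarNorm p X
  rw [supNormSq_swap, hcVar, add_right_comm (supNormSq X)]
  rfl

lemma nnnorm_le_supNormSq (X : ℝ → ℝ → E) {s t : ℝ} (hs : s ∈ Icc (0 : ℝ) 1)
    (ht : t ∈ Icc (0 : ℝ) 1) : (‖X s t‖₊ : ℝ≥0∞) ≤ supNormSq X :=
  le_iSup₂_of_le s hs <| le_iSup₂_of_le t ht le_rfl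

lemma supNormSq_le_cvarNorm (X : ℝ → ℝ → E) : supNormSq X ≤ cvarNorm p X :=
  le_self_add.trans <| le_self_add.trans le_self_add

lemma nnnorm_le_cvarNorm (X : ℝ → ℝ → E) {s t : ℝ} (hs : s ∈ Icc (0 : ℝ) 1)
    (ht : t ∈ Icc (0 : ℝ) 1) : (‖X s t‖₊ : ℝ≥0∞) ≤ cvarNorm p X :=
  (nnnorm_le_supNormSq X hs ht).trans (supNormSq_le_cvarNorm X)

lemma oneVarPow_lower_le_cvarNorm (hp : 0 < p) (X : ℝ → ℝ → E) :
    oneVarPow p (fun s => X s 0) 0 1 ≤ cvarNorm p X ^ p :=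
  (ENNReal.rpow_one_div_le_iff hp).1 <| (le_add_self.trans le_self_add).trans le_self_add

lemma oneVarPow_left_le_cvarNorm (hp : 0 < p) (X : ℝ → ℝ → E) :
    oneVarPow p (fun t => X 0 t) 0 1 ≤ cvarNorm p X ^ p :=
  (ENNReal.rpow_one_div_le_iff hp).1 <| le_add_self.trans le_self_add

lemma cVarPow_le_cvarNorm (hp : 0 < p) (X : ℝ → ℝ → E) :
    cVarPow p X unitRect ≤ cvarNorm p X ^ p :=
  (ENNReal.rpow_one_div_le_iff hp).1 le_add_self

lemma sum_rpow_horizontal_inc_le (hp : 1 ≤ p) (X : ℝ → ℝ → E) {n : ℕ}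
    {σ : Fin (n + 1) → ℝ} (hσ : IsIccPartition σ 0 1) (t : Fin n → ℝ)
    (ht : ∀ i, t i ∈ Icc (0 : ℝ) 1) :
    ∑ i : Fin n, (‖X (σ i.succ) (t i) - X (σ i.castSucc) (t i)‖₊ : ℝ≥0∞) ^ p ≤
      (2 * cvarNorm p X) ^ p := by
  have hp0 : 0 < p := zero_lt_one.trans_le hp
  rw [two_mul]
  refine ENNReal.sum_rpow_le_add_rpow hp (fun i _ => ?_)
    ((sum_le_oneVarPow (fun s => X s 0) hσ).trans (oneVarPow_lower_le_cvarNorm hp0 X))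
    ((sum_lower_strips_le_cVarPow (R := unitRect) X hσ t ht).trans (cVarPow_le_cvarNorm hp0 X))
  rw [show X (σ i.succ) (t i) - X (σ i.castSucc) (t i) = (X (σ i.succ) 0 - X (σ i.castSucc) 0) +
      boxInc X ⟨σ i.castSucc, σ i.succ, 0, t i⟩ by simp only [boxInc]; abel]
  exact enorm_add_le (E := E) _ _

lemma sum_rpow_vertical_inc_le (hp : 1 ≤ p) (X : ℝ → ℝ → E) {m : ℕ}
    {τ : Fin (m + 1) → ℝ} (hτ : IsIccPartition τ 0 1) (s : Fin m → ℝ)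
    (hs : ∀ j, s j ∈ Icc (0 : ℝ) 1) :
    ∑ j : Fin m, (‖X (s j) (τ j.succ) - X (s j) (τ j.castSucc)‖₊ : ℝ≥0∞) ^ p ≤
      (2 * cvarNorm p X) ^ p := by
  rw [← cvarNorm_swap X]
  exact sum_rpow_horizontal_inc_le hp (Function.swap X) hτ s hs

end Variation

lemma ENNReal.sum_rpow_mul_le {ι : Type*} {s : Finset ι} {f g : ι → ℝ≥0∞} {a b : ℝ≥0∞}
    {p : ℝ} (hp : 0 ≤ p) (hf : ∑ i ∈ s, f i ^ p ≤ a ^ p) (hg : ∀ i ∈ s, g i ≤ b) :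
    ∑ i ∈ s, (f i * g i) ^ p ≤ (a * b) ^ p := by
  calc ∑ i ∈ s, (f i * g i) ^ p ≤ ∑ i ∈ s, f i ^ p * b ^ p := by
        gcongr with i hi
        rw [ENNReal.mul_rpow_of_nonneg _ _ hp]
        gcongr
        exact hg i hi
    _ = (∑ i ∈ s, f i ^ p) * b ^ p := (Finset.sum_mul ..).symm
    _ ≤ a ^ p * b ^ p := by gcongr
    _ = (a * b) ^ p := (ENNReal.mul_rpow_of_nonneg _ _ hp).symm

section Product

variable {R : Type*} [NonUnitalNormedRing R] {p : ℝ}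

lemma ENNReal.coe_nnnorm_mul_le (x y : R) : (‖x * y‖₊ : ℝ≥0∞) ≤ ‖x‖₊ * ‖y‖₊ := by
  exact_mod_cast nnnorm_mul_le x y

lemma supNormSq_mul_le (X Y : ℝ → ℝ → R) :
    supNormSq (fun s t => X s t * Y s t) ≤ supNormSq X * supNormSq Y :=
  iSup₂_le fun _ hs => iSup₂_le fun _ ht => (ENNReal.coe_nnnorm_mul_le _ _).trans <|
    mul_le_mul' (nnnorm_le_supNormSq X hs ht) (nnnorm_le_supNormSq Y hs ht)

lemma oneVarPow_mul_le (hp : 1 ≤ p) {x y : ℝ → R} {s s' : ℝ} {a b : ℝ≥0∞}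
    (hx : ∀ r ∈ Icc s s', (‖x r‖₊ : ℝ≥0∞) ≤ a) (hy : ∀ r ∈ Icc s s', (‖y r‖₊ : ℝ≥0∞) ≤ b)
    (hxv : oneVarPow p x s s' ≤ a ^ p) (hyv : oneVarPow p y s s' ≤ b ^ p) :
    oneVarPow p (fun r => x r * y r) s s' ≤ (2 * a * b) ^ p := by
  have hp0 : 0 ≤ p := zero_le_one.trans hp
  refine oneVarPow_le fun k r hr => ?_
  rw [show 2 * a * b = a * b + b * a by ring]
  refine ENNReal.sum_rpow_le_add_rpow hp (fun i _ => ?_)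
    (ENNReal.sum_rpow_mul_le hp0 ((sum_le_oneVarPow x hr).trans hxv)
      fun i _ => hy _ (hr.mem_Icc i.succ))
    (ENNReal.sum_rpow_mul_le hp0 ((sum_le_oneVarPow y hr).trans hyv)
      fun i _ => hx _ (hr.mem_Icc i.castSucc))
  rw [show x (r i.succ) * y (r i.succ) - x (r i.castSucc) * y (r i.castSucc) =
      (x (r i.succ) - x (r i.castSucc)) * y (r i.succ) +
        x (r i.castSucc) * (y (r i.succ) - y (r i.castSucc)) by noncomm_ring]
  calc _ ≤ (‖(x (r i.succ) - x (r i.castSucc)) * y (r i.succ)‖₊ : ℝ≥0∞) +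
        ‖x (r i.castSucc) * (y (r i.succ) - y (r i.castSucc))‖₊ :=
        enorm_add_le (E := R) _ _
    _ ≤ _ := add_le_add (ENNReal.coe_nnnorm_mul_le _ _)
        ((ENNReal.coe_nnnorm_mul_le _ _).trans_eq (mul_comm _ _))

/-- Discrete Leibniz rule for box increments, obtained by applying
`Δ(fg) = Δf · g(t') + f(t) · Δg` in each variable in turn. -/
lemma boxInc_mul (X Y : ℝ → ℝ → R) (r : Rect) :
    boxInc (fun s t => X s t * Y s t) r =
      boxInc X r * Y r.s' r.t' + (X r.s' r.t - X r.s r.t) * (Y r.s' r.t' - Y r.s' r.t) +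
        (X r.s r.t' - X r.s r.t) * (Y r.s' r.t' - Y r.s r.t') + X r.s r.t * boxInc Y r := by
  simp only [boxInc]
  noncomm_ring

lemma nnnorm_boxInc_mul_le (X Y : ℝ → ℝ → R) (r : Rect) :
    (‖boxInc (fun s t => X s t * Y s t) r‖₊ : ℝ≥0∞) ≤
      (‖boxInc X r‖₊ : ℝ≥0∞) * ‖Y r.s' r.t'‖₊ +
        (‖X r.s' r.t - X r.s r.t‖₊ : ℝ≥0∞) * ‖Y r.s' r.t' - Y r.s' r.t‖₊ +
        (‖X r.s r.t' - X r.s r.t‖₊ : ℝ≥0∞) * ‖Y r.s' r.t' - Y r.s r.t'‖₊ +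
        (‖boxInc Y r‖₊ : ℝ≥0∞) * ‖X r.s r.t‖₊ := by
  rw [boxInc_mul]
  simp only [← enorm_eq_nnnorm]
  refine enorm_add₄_le.trans ?_
  gcongr ?_ + ?_ + ?_ + ?_
  iterate 3 exact ENNReal.coe_nnnorm_mul_le _ _
  exact (ENNReal.coe_nnnorm_mul_le _ _).trans_eq (mul_comm _ _)

/-- In each column the increment of `X` is bounded by its maximum over the rows; what remains
factors into increments of `X` at varying heights times increments of `Y` along one abscissa. -/
lemma sum_rpow_mixed_inc_le (hp : 1 ≤ p) (X Y : ℝ → ℝ → R) {n m : ℕ}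
    {σ : Fin (n + 1) → ℝ} {τ : Fin (m + 1) → ℝ} (hσ : IsIccPartition σ 0 1)
    (hτ : IsIccPartition τ 0 1) :
    ∑ i : Fin n, ∑ j : Fin m,
      ((‖X (σ i.succ) (τ j.castSucc) - X (σ i.castSucc) (τ j.castSucc)‖₊ : ℝ≥0∞) *
        ‖Y (σ i.succ) (τ j.succ) - Y (σ i.succ) (τ j.castSucc)‖₊) ^ p ≤
      (2 * cvarNorm p X * (2 * cvarNorm p Y)) ^ p := by
  have hp0 : 0 ≤ p := zero_le_one.trans hp
  simp only [ENNReal.mul_rpow_of_nonneg _ _ hp0]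
  refine ENNReal.sum_sum_mul_le _ _ (fun f => ?_) fun i => ?_
  · simpa only [ENNReal.mul_rpow_of_nonneg _ _ hp0] using
      sum_rpow_horizontal_inc_le hp X hσ (fun i => τ (f i).castSucc) fun _ => hτ.mem_Icc _
  · simpa only [ENNReal.mul_rpow_of_nonneg _ _ hp0] using
      sum_rpow_vertical_inc_le hp Y hτ (fun _ => σ i.succ) fun _ => hσ.mem_Icc _

lemma gridVarPow_mul_le (hp : 1 ≤ p) (X Y : ℝ → ℝ → R) :
    gridVarPow p (fun s t => X s t * Y s t) unitRect ≤
      (10 * cvarNorm p X * cvarNorm p Y) ^ p := by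
  have hp0 : 0 < p := zero_lt_one.trans_le hp
  refine gridVarPow_le fun n m σ τ hσ hτ => ?_
  have hX : ∀ i j, (‖X (σ i) (τ j)‖₊ : ℝ≥0∞) ≤ cvarNorm p X := fun i j =>
    nnnorm_le_cvarNorm X (hσ.mem_Icc i) (hτ.mem_Icc j)
  have hY : ∀ i j, (‖Y (σ i) (τ j)‖₊ : ℝ≥0∞) ≤ cvarNorm p Y := fun i j =>
    nnnorm_le_cvarNorm Y (hσ.mem_Icc i) (hτ.mem_Icc j)
  have hboxX := (sum_grid_le_cVarPow (p := p) X hσ hτ).trans (cVarPow_le_cvarNorm hp0 X)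
  have hboxY := (sum_grid_le_cVarPow (p := p) Y hσ hτ).trans (cVarPow_le_cvarNorm hp0 Y)
  have hmixed := sum_rpow_mixed_inc_le hp X Y hσ hτ
  have hmixed' : ∑ i : Fin n, ∑ j : Fin m,
      ((‖X (σ i.castSucc) (τ j.succ) - X (σ i.castSucc) (τ j.castSucc)‖₊ : ℝ≥0∞) *
        ‖Y (σ i.succ) (τ j.succ) - Y (σ i.castSucc) (τ j.succ)‖₊) ^ p ≤
      (2 * cvarNorm p X * (2 * cvarNorm p Y)) ^ p := by
    rw [Finset.sum_comm, ← cvarNorm_swap X, ← cvarNorm_swap Y]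
    exact sum_rpow_mixed_inc_le hp (Function.swap X) (Function.swap Y) hτ hσ
  simp only [← Fintype.sum_prod_type'] at hboxX hboxY hmixed hmixed' ⊢
  calc _ ≤ (cvarNorm p X * cvarNorm p Y + 2 * cvarNorm p X * (2 * cvarNorm p Y) +
        2 * cvarNorm p X * (2 * cvarNorm p Y) + cvarNorm p Y * cvarNorm p X) ^ p :=
        ENNReal.sum_rpow_le_add_rpow hp (fun _ _ => nnnorm_boxInc_mul_le X Y _)
          (ENNReal.sum_rpow_le_add_rpow hp (fun _ _ => le_rfl)
            (ENNReal.sum_rpow_le_add_rpow hp (fun _ _ => le_rfl)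
              (ENNReal.sum_rpow_mul_le hp0.le hboxX fun _ _ => hY _ _) hmixed) hmixed')
          (ENNReal.sum_rpow_mul_le hp0.le hboxY fun _ _ => hX _ _)
    _ = (10 * cvarNorm p X * cvarNorm p Y) ^ p := by ring_nf

end Product

/-- For `p ≥ 1` there is a constant `C > 0`, depending only on `p`, such
that for all continuous `X, Y : [0,1]² → ℝ` of finite controlled `p`-variation norm, the
pointwise product `Z = X·Y` satisfies `‖Z‖_{p-var} ≤ C·‖X‖_{p-cvar}·‖Y‖_{p-cvar}`
(in `ℝ≥0∞`; in particular `Z` has finite `p`-variation norm). -/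
theorem product_varNorm_le
    (p : ℝ) (hp : 1 ≤ p) :
    ∃ C : ℝ, 0 < C ∧ ∀ X Y : ℝ → ℝ → ℝ,
      ContinuousOn (fun z : ℝ × ℝ => X z.1 z.2) (Set.Icc 0 1 ×ˢ Set.Icc 0 1) →
      ContinuousOn (fun z : ℝ × ℝ => Y z.1 z.2) (Set.Icc 0 1 ×ˢ Set.Icc 0 1) →
      cvarNorm p X ≠ ⊤ → cvarNorm p Y ≠ ⊤ →
      varNorm p (fun s t => X s t * Y s t) ≤
        ENNReal.ofReal C * cvarNorm p X * cvarNorm p Y := by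
  have hp0 : 0 < p := zero_lt_one.trans_le hp
  refine ⟨15, by norm_num, fun X Y _ _ _ _ => ?_⟩
  have h0 : (0 : ℝ) ∈ Icc (0 : ℝ) 1 := left_mem_Icc.2 zero_le_one
  have hsup := (supNormSq_mul_le X Y).trans <|
    mul_le_mul' (supNormSq_le_cvarNorm (p := p) X) (supNormSq_le_cvarNorm (p := p) Y)
  have hlower := oneVarPow_mul_le hp (fun r hr => nnnorm_le_cvarNorm X hr h0)
    (fun r hr => nnnorm_le_cvarNorm Y hr h0)
    (oneVarPow_lower_le_cvarNorm hp0 X) (oneVarPow_lower_le_cvarNorm hp0 Y)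
  have hleft := oneVarPow_mul_le hp (fun r hr => nnnorm_le_cvarNorm X h0 hr)
    (fun r hr => nnnorm_le_cvarNorm Y h0 hr)
    (oneVarPow_left_le_cvarNorm hp0 X) (oneVarPow_left_le_cvarNorm hp0 Y)
  rw [← ENNReal.rpow_one_div_le_iff hp0] at hlower hleft
  have hgrid := (ENNReal.rpow_one_div_le_iff hp0).2 (gridVarPow_mul_le hp X Y)
  calc varNorm p (fun s t => X s t * Y s t)
      ≤ cvarNorm p X * cvarNorm p Y + 2 * cvarNorm p X * cvarNorm p Y +
          2 * cvarNorm p X * cvarNorm p Y + 10 * cvarNorm p X * cvarNorm p Y :=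
        add_le_add (add_le_add (add_le_add hsup hlower) hleft) hgrid
    _ = ENNReal.ofReal 15 * cvarNorm p X * cvarNorm p Y := by
        rw [ENNReal.ofReal_ofNat]
        ring
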